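/- arXiv:2404.09962 — 9 statements merged into one kernel-verified Lean document; each statement's English description precedes it below -/
import Mathlib

section
/- Let {𝒮_j}_{j=1}^q be an orthogonal (Σ_t)_{t∈T}-decorrelating partition. Then for every j ∈ {1,…,q} and every t ∈ T, the vector β* := Π_{𝒮_j} Σ_t^{-1} Π_{𝒮_j} Σ_t γ_t lies in 𝒮_j and is the unique maximizer of the explained variance over 𝒮_j: for every β ∈ 𝒮_j with β ≠ β*, ΔVar_t(β) < ΔVar_t(β*). -/
open Matrix Finset MeasureTheory

noncomputable section

/-- Vectors in `ℝ^p`. -/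
abbrev Vec (p : ℕ) : Type := Fin p → ℝ

/-- Real `p × p` matrices. -/
abbrev Mat (p : ℕ) : Type := Matrix (Fin p) (Fin p) ℝ

/-- Explained variance `ΔVar(β) = 2 γᵀ C β − βᵀ C β` at a time with covariance `C`
and true parameter `γ`. -/
def dVar {p : ℕ} (C : Mat p) (γ β : Vec p) : ℝ :=
  2 * (γ ⬝ᵥ (C *ᵥ β)) - β ⬝ᵥ (C *ᵥ β)

/-- `β₀` is the unique maximizer of `f` over the linear subspace whose orthogonal
projection matrix is `P` (membership in the subspace is expressed as `P *ᵥ β = β`). -/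
def IsUMaxOn {p : ℕ} (f : Vec p → ℝ) (P : Mat p) (β₀ : Vec p) : Prop :=
  P *ᵥ β₀ = β₀ ∧ ∀ β : Vec p, P *ᵥ β = β → β ≠ β₀ → f β < f β₀

/-- The matrices `P j` are the orthogonal projection matrices of a family of pairwise
orthogonal nonzero linear subspaces of `ℝ^p` whose direct sum is `ℝ^p`. -/
structure OrthPartition (p q : ℕ) (P : Fin q → Mat p) : Prop where
  symm : ∀ j, (P j)ᵀ = P j
  idem : ∀ j, P j * P j = P j
  nonzero : ∀ j, P j ≠ 0
  orth : ∀ i j, i ≠ j → P i * P j = 0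
  sum_one : ∑ j, P j = 1

/-!
A decorrelating partition commutes with `Σ_t`: multiplying `Π_j Σ_t` on the right by
`1 = ∑ Π_k` kills every term but `Π_j Σ_t Π_j`, and symmetrically for `Σ_t Π_j`. Hence
`β* = Π_j Σ_t⁻¹ Π_j Σ_t γ_t = Π_j γ_t`, and on `𝒮_j` the explained variance with parameter
`γ_t` agrees with the one with parameter `Π_j γ_t`. Completing the square,
`ΔVar(β*) - ΔVar(β) = (β - β*)ᵀ Σ_t (β - β*) > 0` for `β ≠ β*`.
-/

theorem commute_of_sum_eq_one_of_mul_mul_eq_zero {ι α : Type*} [Fintype ι] [Semiring α]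
    {P : ι → α} (hsum : ∑ i, P i = 1) {c : α} (hdec : ∀ i j, i ≠ j → P i * c * P j = 0)
    (j : ι) : Commute (P j) c := by
  have hright : P j * c = P j * c * P j := by
    calc P j * c = ∑ k, P j * c * P k := by rw [← Finset.mul_sum, hsum, mul_one]
      _ = P j * c * P j :=
        Finset.sum_eq_single_of_mem j (mem_univ j) fun k _ hk => hdec j k (Ne.symm hk)
  have hleft : c * P j = P j * c * P j := by
    calc c * P j = ∑ k, P k * c * P j := by
          rw [← Finset.sum_mul, ← Finset.sum_mul, hsum, one_mul]
      _ = P j * c * P j :=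
        Finset.sum_eq_single_of_mem j (mem_univ j) fun k _ hk => hdec k j hk
  exact hright.trans hleft.symm

namespace Matrix

theorem mul_nonsing_inv_mul_mul_of_commute {m R : Type*} [Fintype m] [DecidableEq m]
    [CommRing R] {P A : Matrix m m R} (hP : IsIdempotentElem P) (hcomm : Commute P A)
    (hA : IsUnit A.det) : P * A⁻¹ * P * A = P := by
  calc P * A⁻¹ * P * A = P * (A⁻¹ * A) * P := by
        rw [Matrix.mul_assoc _ P, hcomm.eq]; simp only [Matrix.mul_assoc]
    _ = P := by rw [nonsing_inv_mul A hA, mul_one, hP.eq]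

end Matrix

section ExplainedVariance

variable {p : ℕ} {C P : Mat p}

theorem dVar_eq_dVar_mulVec_of_commute (hP : Pᵀ = P) (hcomm : Commute P C) (γ : Vec p)
    {β : Vec p} (hβ : P *ᵥ β = β) : dVar C γ β = dVar C (P *ᵥ γ) β := by
  have hcross : γ ⬝ᵥ (C *ᵥ β) = (P *ᵥ γ) ⬝ᵥ (C *ᵥ β) := by
    calc γ ⬝ᵥ (C *ᵥ β) = γ ⬝ᵥ (P *ᵥ (C *ᵥ β)) := by
          rw [mulVec_mulVec, hcomm.eq, ← mulVec_mulVec, hβ]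
      _ = (P *ᵥ γ) ⬝ᵥ (C *ᵥ β) := by
          rw [dotProduct_mulVec, ← hP, vecMul_transpose, hP]
  rw [dVar, dVar, hcross]

theorem dVar_lt_dVar_self (hC : C.PosDef) {b β : Vec p} (hne : β ≠ b) :
    dVar C b β < dVar C b b := by
  have hpos : 0 < (β - b) ⬝ᵥ (C *ᵥ (β - b)) := by
    simpa using hC.dotProduct_mulVec_pos (sub_ne_zero_of_ne hne)
  have hsymm : β ⬝ᵥ (C *ᵥ b) = b ⬝ᵥ (C *ᵥ β) := by
    rw [dotProduct_mulVec, ← mulVec_transpose, show Cᵀ = C from hC.1, dotProduct_comm]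
  have hsquare : dVar C b b - dVar C b β = (β - b) ⬝ᵥ (C *ᵥ (β - b)) := by
    rw [dVar, dVar, mulVec_sub, sub_dotProduct, dotProduct_sub, dotProduct_sub, hsymm]
    ring
  linarith

end ExplainedVariance

theorem stmt1_general {p n q : ℕ}
    (Cov : Fin n → Mat p) (hCov : ∀ t, (Cov t).PosDef)
    (γ : Fin n → Vec p)
    (P : Fin q → Mat p) (hP : OrthPartition p q P)
    (hdec : ∀ (t : Fin n) (i j : Fin q), i ≠ j → P i * Cov t * P j = 0) :
    ∀ (j : Fin q) (t : Fin n),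
      IsUMaxOn (dVar (Cov t) (γ t)) (P j)
        ((P j * (Cov t)⁻¹ * P j * Cov t) *ᵥ γ t) := by
  intro j t
  have hcomm := commute_of_sum_eq_one_of_mul_mul_eq_zero hP.sum_one (hdec t) j
  rw [mul_nonsing_inv_mul_mul_of_commute (hP.idem j) hcomm (hCov t).det_pos.ne'.isUnit]
  have hmem : P j *ᵥ (P j *ᵥ γ t) = P j *ᵥ γ t := by rw [mulVec_mulVec, hP.idem j]
  refine ⟨hmem, fun β hβ hne => ?_⟩
  rw [dVar_eq_dVar_mulVec_of_commute (hP.symm j) hcomm _ hβ,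
    dVar_eq_dVar_mulVec_of_commute (hP.symm j) hcomm _ hmem]
  exact dVar_lt_dVar_self (hCov t) hne

/-- Lemma 2 of the paper: for an orthogonal `(Σ_t)`-decorrelating
partition, `β* := Π_j Σ_t⁻¹ Π_j Σ_t γ_t` lies in `𝒮_j` and is the unique maximizer of
the explained variance `ΔVar_t` over `𝒮_j`. -/
theorem stmt1 {p n q : ℕ} (hp : 1 ≤ p) (hn : 1 ≤ n)
    (Cov : Fin n → Mat p) (hCov : ∀ t, (Cov t).PosDef)
    (γ : Fin n → Vec p)
    (P : Fin q → Mat p) (hP : OrthPartition p q P)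
    (hdec : ∀ (t : Fin n) (i j : Fin q), i ≠ j → P i * Cov t * P j = 0) :
    ∀ (j : Fin q) (t : Fin n),
      IsUMaxOn (dVar (Cov t) (γ t)) (P j)
        ((P j * (Cov t)⁻¹ * P j * Cov t) *ᵥ γ t) :=
  stmt1_general Cov hCov γ P hP hdec
end
end

section
/- Suppose 𝒮^inv and 𝒮^res are orthogonal linear subspaces of ℝ^p with 𝒮^inv ⊕ 𝒮^res = ℝ^p such that for all t ∈ ℕ, Π_{𝒮^inv} Σ_t Π_{𝒮^res} = 0, and such that 𝒮^inv is opt-invariant on ℕ (the unique maximizer of β ↦ ΔVar_t(β) over 𝒮^inv is the same for all t ∈ ℕ). Then for every t ∈ ℕ, γ_t equals the sum of the unique maximizer of β ↦ (1/n)∑_{s=1}^n ΔVar_s(β) over 𝒮^inv and the unique maximizer of β ↦ ΔVar_t(β) over 𝒮^res. -/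
open Matrix Finset MeasureTheory

noncomputable section

/-!
Proof. If `Π_inv Σ_t Π_res = 0` then both subspaces are `Σ_t`-invariant, so the residual
`γ_t − Π γ_t` of the orthogonal projection onto either subspace is `Σ_t`-orthogonal to that
subspace; completing the square then shows that `Π γ_t` is the unique maximizer of `ΔVar_t`
there. Opt-invariance makes `Π_inv γ_t` a common strict maximizer of all the `ΔVar_s`, hence
of their average, and `γ_t = Π_inv γ_t + Π_res γ_t`.
-/

namespace IsUMaxOn

variable {p : ℕ} {f : Vec p → ℝ} {P : Mat p} {a b : Vec p}

theorem unique (ha : IsUMaxOn f P a) (hb : IsUMaxOn f P b) : a = b := by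
  by_contra hab
  have hba := ha.2 b hb.1 (Ne.symm hab)
  have hab' := hb.2 a ha.1 hab
  linarith

theorem const_mul_sum {ι : Type*} {S : Finset ι} {F : ι → Vec p → ℝ} {c : ℝ}
    (hS : S.Nonempty) (hc : 0 < c) (h : ∀ s ∈ S, IsUMaxOn (F s) P a) :
    IsUMaxOn (fun β => c * ∑ s ∈ S, F s β) P a := by
  obtain ⟨s₀, hs₀⟩ := hS
  refine ⟨(h s₀ hs₀).1, fun β hβ hne => ?_⟩
  have hlt : ∑ s ∈ S, F s β < ∑ s ∈ S, F s a :=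
    Finset.sum_lt_sum_of_nonempty ⟨s₀, hs₀⟩ fun s hs => (h s hs).2 β hβ hne
  exact mul_lt_mul_of_pos_left hlt hc

end IsUMaxOn

section ExplainedVariance

variable {p : ℕ} {C P : Mat p}

theorem dVar_sub_dVar (hC : Cᵀ = C) (γ g β : Vec p) :
    dVar C γ g - dVar C γ β =
      (β - g) ⬝ᵥ (C *ᵥ (β - g)) + 2 * ((γ - g) ⬝ᵥ (C *ᵥ (g - β))) := by
  have hsymm : g ⬝ᵥ (C *ᵥ β) = β ⬝ᵥ (C *ᵥ g) := by
    rw [dotProduct_mulVec, ← mulVec_transpose, hC, dotProduct_comm]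
  simp only [dVar, mulVec_sub, sub_dotProduct, dotProduct_sub]
  linarith

theorem isUMaxOn_dVar_of_residual_orthogonal (hC : C.PosDef) {γ g : Vec p}
    (hg : P *ᵥ g = g) (horth : ∀ v, P *ᵥ v = v → (γ - g) ⬝ᵥ (C *ᵥ v) = 0) :
    IsUMaxOn (dVar C γ) P g := by
  refine ⟨hg, fun β hβ hne => ?_⟩
  have hgap : 0 < (β - g) ⬝ᵥ (C *ᵥ (β - g)) := by
    simpa using hC.dotProduct_mulVec_pos (sub_ne_zero.mpr hne)
  have hcross : (γ - g) ⬝ᵥ (C *ᵥ (g - β)) = 0 :=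
    horth _ (by rw [mulVec_sub, hg, hβ])
  have := dVar_sub_dVar (isHermitian_iff_isSymm.mp hC.1).eq γ g β
  linarith

theorem residual_orthogonal_of_invariant (hsymm : Pᵀ = P) (hidem : P * P = P)
    (hinv : C * P = P * C * P) (γ v : Vec p) (hv : P *ᵥ v = v) :
    (γ - P *ᵥ γ) ⬝ᵥ (C *ᵥ v) = 0 := by
  have hCv : C *ᵥ v = P *ᵥ (C *ᵥ v) := by
    rw [← hv, mulVec_mulVec, hinv, mulVec_mulVec, ← Matrix.mul_assoc, ← Matrix.mul_assoc, hidem]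
  rw [hCv, dotProduct_mulVec, ← mulVec_transpose, hsymm, mulVec_sub, mulVec_mulVec, hidem,
    sub_self, zero_dotProduct]

theorem isUMaxOn_dVar_proj (hC : C.PosDef) (hsymm : Pᵀ = P) (hidem : P * P = P)
    (hinv : C * P = P * C * P) (γ : Vec p) :
    IsUMaxOn (dVar C γ) P (P *ᵥ γ) :=
  isUMaxOn_dVar_of_residual_orthogonal hC (by rw [mulVec_mulVec, hidem])
    (residual_orthogonal_of_invariant hsymm hidem hinv γ)

theorem mul_eq_mul_mul_of_add_eq_one {Q : Mat p} (hsum : Q + P = 1) (hdec : Q * C * P = 0) :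
    C * P = P * C * P := by
  calc C * P = (Q + P) * C * P := by rw [hsum, Matrix.one_mul]
    _ = P * C * P := by rw [Matrix.add_mul, Matrix.add_mul, hdec, zero_add]

end ExplainedVariance

theorem stmt2_general {p n : ℕ} (hn : 1 ≤ n)
    (Cov : ℕ → Mat p) (hCov : ∀ t, 1 ≤ t → (Cov t).PosDef)
    (γ : ℕ → Vec p)
    (Pinv Pres : Mat p)
    (hsymm₁ : Pinvᵀ = Pinv) (hidem₁ : Pinv * Pinv = Pinv)
    (hsymm₂ : Presᵀ = Pres) (hidem₂ : Pres * Pres = Pres)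
    (hsum : Pinv + Pres = 1)
    (hdec : ∀ t, 1 ≤ t → Pinv * Cov t * Pres = 0)
    (hoptinv : ∃ β₀ : Vec p, ∀ t, 1 ≤ t → IsUMaxOn (dVar (Cov t) (γ t)) Pinv β₀) :
    ∀ t, 1 ≤ t →
      ∀ βinv δ : Vec p,
        IsUMaxOn (fun β => (n : ℝ)⁻¹ * ∑ s ∈ Finset.Icc 1 n, dVar (Cov s) (γ s) β)
          Pinv βinv →
        IsUMaxOn (dVar (Cov t) (γ t)) Pres δ →
        γ t = βinv + δ := by
  intro t ht βinv δ hβinv hδ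
  obtain ⟨β₀, hβ₀⟩ := hoptinv
  have hdec_swap (s : ℕ) (hs : 1 ≤ s) : Pres * Cov s * Pinv = 0 := by
    have hCsymm := (isHermitian_iff_isSymm.mp (hCov s hs).1).eq
    simpa [transpose_mul, hsymm₁, hsymm₂, hCsymm, Matrix.mul_assoc] using
      congrArg transpose (hdec s hs)
  have hmaxinv (s : ℕ) (hs : 1 ≤ s) : IsUMaxOn (dVar (Cov s) (γ s)) Pinv (Pinv *ᵥ γ s) :=
    isUMaxOn_dVar_proj (hCov s hs) hsymm₁ hidem₁
      (mul_eq_mul_mul_of_add_eq_one (add_comm Pinv Pres ▸ hsum) (hdec_swap s hs)) (γ s)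
  have hmaxres : IsUMaxOn (dVar (Cov t) (γ t)) Pres (Pres *ᵥ γ t) :=
    isUMaxOn_dVar_proj (hCov t ht) hsymm₂ hidem₂
      (mul_eq_mul_mul_of_add_eq_one hsum (hdec t ht)) (γ t)
  have havg : IsUMaxOn (fun β => (n : ℝ)⁻¹ * ∑ s ∈ Finset.Icc 1 n, dVar (Cov s) (γ s) β)
      Pinv β₀ :=
    IsUMaxOn.const_mul_sum ⟨1, Finset.mem_Icc.mpr ⟨le_rfl, hn⟩⟩ (by positivity)
      fun s hs => hβ₀ s (Finset.mem_Icc.mp hs).1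
  calc γ t = Pinv *ᵥ γ t + Pres *ᵥ γ t := by rw [← add_mulVec, hsum, one_mulVec]
    _ = βinv + δ := by
      rw [(hmaxinv t ht).unique (hβ₀ t ht), havg.unique hβinv, hmaxres.unique hδ]

/-- Theorem 1 of the paper: if `𝒮^inv, 𝒮^res` are orthogonal
complementary subspaces decorrelating all covariances, and `𝒮^inv` is opt-invariant on
`ℕ` (time indices start at `1`), then `γ_t` is the sum of the unique maximizer of the
averaged explained variance over `𝒮^inv` and the unique maximizer of `ΔVar_t` over
`𝒮^res`. -/
theorem stmt2 {p n : ℕ} (hp : 1 ≤ p) (hn : 1 ≤ n)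
    (Cov : ℕ → Mat p) (hCov : ∀ t, 1 ≤ t → (Cov t).PosDef)
    (γ : ℕ → Vec p)
    (Pinv Pres : Mat p)
    (hsymm₁ : Pinvᵀ = Pinv) (hidem₁ : Pinv * Pinv = Pinv)
    (hsymm₂ : Presᵀ = Pres) (hidem₂ : Pres * Pres = Pres)
    (horth : Pinv * Pres = 0)
    (hsum : Pinv + Pres = 1)
    (hdec : ∀ t, 1 ≤ t → Pinv * Cov t * Pres = 0)
    (hoptinv : ∃ β₀ : Vec p, ∀ t, 1 ≤ t → IsUMaxOn (dVar (Cov t) (γ t)) Pinv β₀) :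
    ∀ t, 1 ≤ t →
      ∀ βinv δ : Vec p,
        IsUMaxOn (fun β => (n : ℝ)⁻¹ * ∑ s ∈ Finset.Icc 1 n, dVar (Cov s) (γ s) β)
          Pinv βinv →
        IsUMaxOn (dVar (Cov t) (γ t)) Pres δ →
        γ t = βinv + δ :=
  stmt2_general hn Cov hCov γ Pinv Pres hsymm₁ hidem₁ hsymm₂ hidem₂ hsum hdec hoptinv
end
end

section
/- Let B be a symmetric invertible m×m real matrix, let U be an orthogonal m×m matrix and S_1,…,S_q disjoint subsets of {1,…,m} such that UᵀBU is block diagonal with diagonal blocks (U^{S_j})ᵀBU^{S_j} for j = 1,…,q (all off-block entries zero). Then for every j ∈ {1,…,q}, the matrix Π_{𝒮_j} B^{-1} Π_{𝒮_j} is the Moore–Penrose pseudoinverse of Π_{𝒮_j} B Π_{𝒮_j}, where Π_{𝒮_j} := U^{S_j}(U^{S_j})ᵀ; that is, writing A := Π_{𝒮_j} B Π_{𝒮_j} and A⁺ := Π_{𝒮_j} B^{-1} Π_{𝒮_j}, the four Penrose equations hold: A A⁺ A = A, A⁺ A A⁺ = A⁺, (A A⁺)ᵀ = A A⁺, and (A⁺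 A)ᵀ = A⁺ A. -/
open Matrix Finset MeasureTheory

noncomputable section

/-- The submatrix of `U` consisting of the columns indexed by `S`. -/
def colSub {m : ℕ} (U : Matrix (Fin m) (Fin m) ℝ) (S : Finset (Fin m)) :
    Matrix (Fin m) S ℝ :=
  U.submatrix id (fun k => (k : Fin m))

/-- The matrix `U^S (U^S)ᵀ` (orthogonal projection onto `span{u^k : k ∈ S}` when `U`
is orthogonal). -/
def projOf {m : ℕ} (U : Matrix (Fin m) (Fin m) ℝ) (S : Finset (Fin m)) :
    Matrix (Fin m) (Fin m) ℝ :=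
  colSub U S * (colSub U S)ᵀ

lemma projE' {m : ℕ} (U : Matrix (Fin m) (Fin m) ℝ) (S : Finset (Fin m)) :
    projOf U S = U * Matrix.diagonal (fun k => if k ∈ S then (1:ℝ) else 0) * Uᵀ := by
  ext a b
  rw [projOf, colSub, Matrix.mul_apply, Matrix.mul_apply]
  simp only [Matrix.mul_diagonal, Matrix.transpose_apply, Matrix.submatrix_apply, id]
  rw [Finset.sum_coe_sort S (fun k => U a k * U b k)]
  simp [mul_ite, ite_mul, Finset.sum_ite_mem]

/-- Lemma A.1 of the paper: for a symmetric invertible `B` that is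
jointly block diagonalized by an orthogonal `U` with index blocks `S_1,…,S_q`, the
matrix `A⁺ := Π_j B⁻¹ Π_j` is the Moore–Penrose pseudoinverse of `A := Π_j B Π_j`,
where `Π_j = U^{S_j}(U^{S_j})ᵀ`: the four Penrose equations hold. -/
theorem stmt10 {m q : ℕ}
    (B : Matrix (Fin m) (Fin m) ℝ) (hBsymm : Bᵀ = B) (hBinv : IsUnit B.det)
    (U : Matrix (Fin m) (Fin m) ℝ) (hU : Uᵀ * U = 1)
    (S : Fin q → Finset (Fin m))
    (hdisj : ∀ i j, i ≠ j → Disjoint (S i) (S j))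
    (hblock : ∀ k l : Fin m, (¬ ∃ j, k ∈ S j ∧ l ∈ S j) → (Uᵀ * B * U) k l = 0) :
    ∀ j : Fin q,
      (projOf U (S j) * B * projOf U (S j)) * (projOf U (S j) * B⁻¹ * projOf U (S j)) *
          (projOf U (S j) * B * projOf U (S j))
        = projOf U (S j) * B * projOf U (S j) ∧
      (projOf U (S j) * B⁻¹ * projOf U (S j)) * (projOf U (S j) * B * projOf U (S j)) *
          (projOf U (S j) * B⁻¹ * projOf U (S j))
        = projOf U (S j) * B⁻¹ * projOf U (S j) ∧
      ((projOf U (S j) * B * projOf U (S j)) * (projOf U (S j) * B⁻¹ * projOf U (S j)))ᵀ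
        = (projOf U (S j) * B * projOf U (S j)) * (projOf U (S j) * B⁻¹ * projOf U (S j)) ∧
      ((projOf U (S j) * B⁻¹ * projOf U (S j)) * (projOf U (S j) * B * projOf U (S j)))ᵀ
        = (projOf U (S j) * B⁻¹ * projOf U (S j)) * (projOf U (S j) * B * projOf U (S j)) := by
  intro j
  have hUU : U * Uᵀ = 1 := mul_eq_one_comm.mp hU
  have hBB : B * B⁻¹ = 1 := Matrix.mul_nonsing_inv B hBinv
  have hB'B : B⁻¹ * B = 1 := Matrix.nonsing_inv_mul B hBinv
  set E : Matrix (Fin m) (Fin m) ℝ :=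
    Matrix.diagonal (fun k => if k ∈ S j then (1:ℝ) else 0) with hE
  set D : Matrix (Fin m) (Fin m) ℝ := Uᵀ * B * U with hD
  -- E commutes with D
  have hED : E * D = D * E := by
    ext k l
    rw [hE, Matrix.diagonal_mul, Matrix.mul_diagonal]
    by_cases hk : k ∈ S j <;> by_cases hl : l ∈ S j <;> simp [hk, hl]
    · refine (hblock k l ?_)
      rintro ⟨i, hki, hli⟩
      rcases eq_or_ne i j with rfl | hne
      · exact hl hli
      · exact absurd (Finset.disjoint_left.mp (hdisj i j hne) hki) (by simp [hk])
    · refine (hblock k l ?_).symm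
      rintro ⟨i, hki, hli⟩
      rcases eq_or_ne i j with rfl | hne
      · exact hk hki
      · exact absurd (Finset.disjoint_left.mp (hdisj i j hne) hli) (by simp [hl])
  have hEE : E * E = E := by
    rw [hE, Matrix.diagonal_mul_diagonal]
    refine congrArg Matrix.diagonal (funext fun k => ?_)
    by_cases h : k ∈ S j <;> simp [h]
  have hB' : U * D * Uᵀ = B := by
    rw [hD]
    calc U * (Uᵀ * B * U) * Uᵀ = (U * Uᵀ) * B * (U * Uᵀ) := by simp only [Matrix.mul_assoc]
    _ = B := by rw [hUU, Matrix.one_mul, Matrix.mul_one]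
  have key : ∀ X Y : Matrix (Fin m) (Fin m) ℝ,
      (U * X * Uᵀ) * (U * Y * Uᵀ) = U * (X * Y) * Uᵀ := by
    intro X Y
    simp only [Matrix.mul_assoc]
    rw [show Uᵀ * (U * (Y * Uᵀ)) = Y * Uᵀ by rw [← Matrix.mul_assoc, hU, Matrix.one_mul]]
  set P : Matrix (Fin m) (Fin m) ℝ := U * E * Uᵀ with hPdef
  have hproj : projOf U (S j) = P := projE' U (S j)
  have hPP : P * P = P := by rw [hPdef, key, hEE]
  have hPsymm : Pᵀ = P := by
    rw [hPdef]
    simp only [Matrix.transpose_mul, Matrix.transpose_transpose, hE,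
      Matrix.diagonal_transpose, Matrix.mul_assoc]
  have hcom : P * B = B * P := by
    rw [← hB', hPdef, key, key, hED]
  have hcom' : P * B⁻¹ = B⁻¹ * P := by
    calc P * B⁻¹ = B⁻¹ * B * P * B⁻¹ := by rw [hB'B, Matrix.one_mul]
    _ = B⁻¹ * (P * B) * B⁻¹ := by rw [hcom]; simp only [Matrix.mul_assoc]
    _ = B⁻¹ * P * (B * B⁻¹) := by simp only [Matrix.mul_assoc]
    _ = B⁻¹ * P := by rw [hBB, Matrix.mul_one]
  have hA : P * B * P = P * B := by
    rw [hcom, Matrix.mul_assoc, hPP]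
  have hA' : P * B⁻¹ * P = P * B⁻¹ := by
    rw [hcom', Matrix.mul_assoc, hPP]
  have hAA' : (P * B) * (P * B⁻¹) = P := by
    calc (P * B) * (P * B⁻¹) = P * (B * P) * B⁻¹ := by simp only [Matrix.mul_assoc]
    _ = P * (P * B) * B⁻¹ := by rw [hcom]
    _ = P * P * (B * B⁻¹) := by simp only [Matrix.mul_assoc]
    _ = P := by rw [hPP, hBB, Matrix.mul_one]
  have hA'A : (P * B⁻¹) * (P * B) = P := by
    calc (P * B⁻¹) * (P * B) = P * (B⁻¹ * P) * B := by simp only [Matrix.mul_assoc]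
    _ = P * (P * B⁻¹) * B := by rw [hcom']
    _ = P * P * (B⁻¹ * B) := by simp only [Matrix.mul_assoc]
    _ = P := by rw [hPP, hB'B, Matrix.mul_one]
  rw [hproj]
  refine ⟨?_, ?_, ?_, ?_⟩
  · rw [hA, hA', hAA', ← Matrix.mul_assoc, hPP]
  · rw [hA, hA', hA'A, ← Matrix.mul_assoc, hPP]
  · rw [hA, hA', hAA', hPsymm]
  · rw [hA, hA', hA'A, hPsymm]
end
end

section
/- Let {𝒮_j}_{j=1}^q be an orthogonal (Σ_t)_{t∈T}-decorrelating partition and let 𝒮^inv be the direct sum of those 𝒮_j that are opt-invariant on T. Then 𝒮^inv is opt-invariant on T: for all t, s ∈ T, the unique maximizer of β ↦ ΔVar_t(β) over 𝒮^inv equals the unique maximizer of β ↦ ΔVar_s(β) over 𝒮^inv; moreover this common maximizer equals the sum over the opt-invariant indices j of the unique maximizers of ΔVar_t over the subspaces 𝒮_j. -/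
open Matrix Finset MeasureTheory

noncomputable section

/-- The subspace with orthogonal projection `Q` is opt-invariant on `{1,…,n}`:
the unique maximizer of `ΔVar_t` over it is the same for all `t`. -/
def OptInv {p n : ℕ} (Cov : Fin n → Mat p) (γ : Fin n → Vec p) (Q : Mat p) : Prop :=
  ∃ β₀ : Vec p, ∀ t : Fin n, IsUMaxOn (dVar (Cov t) (γ t)) Q β₀

open scoped Classical in
/-- Orthogonal projection onto `𝒮^inv`, the direct sum of the opt-invariant subspaces
of the partition. -/
noncomputable def invProj {p n q : ℕ} (Cov : Fin n → Mat p) (γ : Fin n → Vec p)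
    (P : Fin q → Mat p) : Mat p :=
  ∑ j ∈ Finset.univ.filter (fun j => OptInv Cov γ (P j)), P j

open scoped Classical in
/-- Orthogonal projection onto `𝒮^res`, the direct sum of the non-opt-invariant
subspaces of the partition. -/
noncomputable def resProj {p n q : ℕ} (Cov : Fin n → Mat p) (γ : Fin n → Vec p)
    (P : Fin q → Mat p) : Mat p :=
  ∑ j ∈ Finset.univ.filter (fun j => ¬ OptInv Cov γ (P j)), P j

lemma dot_sum_right {p : ℕ} {ι : Type*} (v : Vec p) (J : Finset ι) (c : ι → Vec p) :
    v ⬝ᵥ (∑ j ∈ J, c j) = ∑ j ∈ J, v ⬝ᵥ c j := by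
  simp only [dotProduct, Finset.sum_apply, Finset.mul_sum]
  rw [Finset.sum_comm]

lemma dot_sum_left {p : ℕ} {ι : Type*} (v : Vec p) (J : Finset ι) (c : ι → Vec p) :
    (∑ j ∈ J, c j) ⬝ᵥ v = ∑ j ∈ J, c j ⬝ᵥ v := by
  simp only [dotProduct, Finset.sum_apply, Finset.sum_mul]
  rw [Finset.sum_comm]

lemma mulVec_sum_right {p : ℕ} {ι : Type*} (C : Mat p) (J : Finset ι) (c : ι → Vec p) :
    C *ᵥ (∑ j ∈ J, c j) = ∑ j ∈ J, C *ᵥ c j := by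
  ext i
  simp only [Matrix.mulVec, Finset.sum_apply]
  exact dot_sum_right (C i) J c

lemma sum_mulVec' {p : ℕ} {ι : Type*} (J : Finset ι) (A : ι → Mat p) (v : Vec p) :
    (∑ j ∈ J, A j) *ᵥ v = ∑ j ∈ J, A j *ᵥ v := by
  ext i
  simp only [Matrix.mulVec, Finset.sum_apply, Matrix.sum_apply]
  simpa [dotProduct, Finset.sum_mul] using dot_sum_left v J (fun j => A j i)

lemma crossZero {p : ℕ} {A C B : Mat p} (hA : Aᵀ = A) (h : A * C * B = 0) (u v : Vec p) :
    (A *ᵥ u) ⬝ᵥ (C *ᵥ (B *ᵥ v)) = 0 := by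
  rw [Matrix.mulVec_mulVec, Matrix.dotProduct_mulVec, ← Matrix.vecMul_transpose, hA,
    Matrix.vecMul_vecMul, ← Matrix.mul_assoc, h, Matrix.vecMul_zero, zero_dotProduct]

lemma dVar_sum {p : ℕ} {q : ℕ} (C : Mat p) (g : Vec p) (P : Fin q → Mat p)
    (hsymm : ∀ j, (P j)ᵀ = P j)
    (hdec : ∀ i j : Fin q, i ≠ j → P i * C * P j = 0)
    (J : Finset (Fin q)) (c : Fin q → Vec p) (hc : ∀ j ∈ J, P j *ᵥ c j = c j) :
    dVar C g (∑ j ∈ J, c j) = ∑ j ∈ J, dVar C g (c j) := by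
  have hlin : C *ᵥ (∑ j ∈ J, c j) = ∑ j ∈ J, C *ᵥ c j := mulVec_sum_right C J c
  have hquad : (∑ i ∈ J, c i) ⬝ᵥ (C *ᵥ (∑ j ∈ J, c j)) = ∑ j ∈ J, c j ⬝ᵥ (C *ᵥ c j) := by
    rw [hlin, dot_sum_right]
    rw [Finset.sum_congr rfl (fun j hj => dot_sum_left (C *ᵥ c j) J c)]
    rw [Finset.sum_comm]
    refine Finset.sum_congr rfl (fun i hi => ?_)
    rw [Finset.sum_eq_single_of_mem i hi]
    intro j hj hji
    rw [← hc i hi, ← hc j hj]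
    exact crossZero (hsymm i) (hdec i j hji.symm) _ _
  unfold dVar
  rw [hquad, hlin, dot_sum_right, Finset.mul_sum, ← Finset.sum_sub_distrib]

/-- Lemma A.5 of the paper: `𝒮^inv` is opt-invariant on `{1,…,n}`
and the common maximizer over `𝒮^inv` is the sum, over the opt-invariant indices `j`,
of the (time-independent) unique maximizers of `ΔVar_t` over the subspaces `𝒮_j`. -/
theorem stmt13 {p n q : ℕ} (hp : 1 ≤ p) (hn : 1 ≤ n)
    (Cov : Fin n → Mat p) (hCov : ∀ t, (Cov t).PosDef)
    (γ : Fin n → Vec p)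
    (P : Fin q → Mat p) (hP : OrthPartition p q P)
    (hdec : ∀ (t : Fin n) (i j : Fin q), i ≠ j → P i * Cov t * P j = 0)
    (J : Finset (Fin q)) (hJ : ∀ j, j ∈ J ↔ OptInv Cov γ (P j))
    (b : Fin q → Vec p)
    (hb : ∀ j ∈ J, ∀ t : Fin n, IsUMaxOn (dVar (Cov t) (γ t)) (P j) (b j)) :
    ∀ t : Fin n, IsUMaxOn (dVar (Cov t) (γ t)) (∑ j ∈ J, P j) (∑ j ∈ J, b j) := by
  intro t
  have hsymm := hP.symm
  have horth := hP.orth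
  have hPb : ∀ j ∈ J, P j *ᵥ b j = b j := fun j hj => (hb j hj t).1
  have hzero : ∀ i j : Fin q, i ≠ j → ∀ v : Vec p, P i *ᵥ (P j *ᵥ v) = 0 := by
    intro i j hij v
    rw [Matrix.mulVec_mulVec, horth i j hij, Matrix.zero_mulVec]
  have hPsum : ∀ i ∈ J, P i *ᵥ (∑ j ∈ J, b j) = b i := by
    intro i hi
    have : P i *ᵥ (∑ j ∈ J, b j) = ∑ j ∈ J, P i *ᵥ b j := mulVec_sum_right (P i) J b
    rw [this, Finset.sum_eq_single_of_mem i hi]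
    · exact hPb i hi
    · intro j hj hji
      rw [← hPb j hj]
      exact hzero i j (Ne.symm hji) _
  have hmem : (∑ j ∈ J, P j) *ᵥ (∑ j ∈ J, b j) = ∑ j ∈ J, b j := by
    rw [sum_mulVec']
    exact Finset.sum_congr rfl hPsum
  refine ⟨hmem, ?_⟩
  intro β hβ hne
  have hβdec : β = ∑ j ∈ J, P j *ᵥ β := by
    conv_lhs => rw [← hβ]
    rw [sum_mulVec']
  have hmemj : ∀ j ∈ J, P j *ᵥ (P j *ᵥ β) = P j *ᵥ β := by
    intro j hj
    rw [Matrix.mulVec_mulVec, hP.idem j]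
  have h1 : dVar (Cov t) (γ t) β = ∑ j ∈ J, dVar (Cov t) (γ t) (P j *ᵥ β) := by
    conv_lhs => rw [hβdec]
    exact dVar_sum (Cov t) (γ t) P hsymm (hdec t) J _ hmemj
  have h2 : dVar (Cov t) (γ t) (∑ j ∈ J, b j) = ∑ j ∈ J, dVar (Cov t) (γ t) (b j) :=
    dVar_sum (Cov t) (γ t) P hsymm (hdec t) J b hPb
  rw [h1, h2]
  have hex : ∃ j ∈ J, P j *ᵥ β ≠ b j := by
    by_contra hcon
    push_neg at hcon
    apply hne
    rw [hβdec]
    exact Finset.sum_congr rfl hcon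
  obtain ⟨j₀, hj₀, hj₀ne⟩ := hex
  refine Finset.sum_lt_sum (fun j hj => ?_) ⟨j₀, hj₀, ?_⟩
  · rcases eq_or_ne (P j *ᵥ β) (b j) with h | h
    · rw [h]
    · exact le_of_lt ((hb j hj t).2 _ (hmemj j hj) h)
  · exact (hb j₀ hj₀ t).2 _ (hmemj j₀ hj₀) hj₀ne
end
end

section
/- Let A_1,…,A_n be symmetric positive definite p×p real matrices, and suppose that for some t₀ ∈ {1,…,n} the matrix A_{t₀} has p pairwise distinct eigenvalues. Then any two irreducible orthogonal (A_t)_{t∈{1,…,n}}-decorrelating partitions are equal as unordered families of subspaces. (This is the partition form of the statement that any two irreducible orthogonal joint block diagonalizers of {A_t} are equal up to block permutations and block-wise isometric transformations.) -/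
set_option maxHeartbeats 1000000


open Matrix Finset MeasureTheory

noncomputable section

/-- `P` is (the family of orthogonal projections of) an orthogonal
`(A_t)`-decorrelating partition. -/
def IsDecorrPartition {p n : ℕ} (A : Fin n → Mat p) {q : ℕ} (P : Fin q → Mat p) :
    Prop :=
  OrthPartition p q P ∧ ∀ (t : Fin n) (i j : Fin q), i ≠ j → P i * A t * P j = 0

/-- `P` is an irreducible orthogonal `(A_t)`-decorrelating partition: there is no
orthogonal `(A_t)`-decorrelating partition of strictly larger cardinality. -/
def IsIrredDecorrPartition {p n : ℕ} (A : Fin n → Mat p) {q : ℕ}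
    (P : Fin q → Mat p) : Prop :=
  IsDecorrPartition A P ∧
    ∀ (q' : ℕ) (P' : Fin q' → Mat p), IsDecorrPartition A P' → q' ≤ q


/- auxiliary lemmas -/


lemma mid_swap {p : ℕ} (a b c d : Mat p) (h : b * c = c * b) :
    (a * b) * (c * d) = (a * c) * (b * d) := by
  rw [mul_assoc, ← mul_assoc b c d, h, mul_assoc, ← mul_assoc]

lemma offdiag_comm {p : ℕ} {M N : Mat p}
    (hM : ∀ a b, a ≠ b → M a b = 0) (hN : ∀ a b, a ≠ b → N a b = 0) :
    M * N = N * M := by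
  ext a b
  simp only [Matrix.mul_apply]
  rcases eq_or_ne a b with rfl | hab
  · refine Finset.sum_congr rfl fun k _ => ?_
    rcases eq_or_ne k a with rfl | hk
    · ring
    · rw [hM a k (Ne.symm hk), hN a k (Ne.symm hk)]; ring
  · have h1 : ∑ k, M a k * N k b = 0 := by
      refine Finset.sum_eq_zero fun k _ => ?_
      rcases eq_or_ne k b with rfl | hk
      · rw [hM a k hab, zero_mul]
      · rw [hN k b hk, mul_zero]
    have h2 : ∑ k, N a k * M k b = 0 := by
      refine Finset.sum_eq_zero fun k _ => ?_
      rcases eq_or_ne k a with rfl | hk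
      · rw [hM k b hab, mul_zero]
      · rw [hN a k (Ne.symm hk), zero_mul]
    rw [h1, h2]

lemma offdiag_zero_of_commute {p : ℕ} {d : Fin p → ℝ} (hd : Function.Injective d)
    {N : Mat p} (h : N * Matrix.diagonal d = Matrix.diagonal d * N)
    {a b : Fin p} (hab : a ≠ b) : N a b = 0 := by
  have h1 := congrFun (congrFun h a) b
  rw [Matrix.mul_diagonal, Matrix.diagonal_mul] at h1
  have hd' : d b - d a ≠ 0 := sub_ne_zero.mpr fun hh => hab (hd hh).symm
  have h2 : N a b * (d b - d a) = 0 := by ring_nf; linarith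
  rcases mul_eq_zero.mp h2 with h3 | h3
  · exact h3
  · exact absurd h3 hd'

lemma myconj_mul {p : ℕ} {V : Mat p} (hV' : V * Vᵀ = 1) (X Y : Mat p) :
    (Vᵀ * X * V) * (Vᵀ * Y * V) = Vᵀ * (X * Y) * V := by
  calc (Vᵀ * X * V) * (Vᵀ * Y * V) = Vᵀ * X * (V * Vᵀ) * Y * V := by
        simp only [mul_assoc]
    _ = Vᵀ * (X * Y) * V := by rw [hV']; simp only [mul_assoc, mul_one, one_mul]

lemma myconj_mul' {p : ℕ} {V : Mat p} (hV : Vᵀ * V = 1) (X Y : Mat p) :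
    (V * X * Vᵀ) * (V * Y * Vᵀ) = V * (X * Y) * Vᵀ := by
  calc (V * X * Vᵀ) * (V * Y * Vᵀ) = V * X * (Vᵀ * V) * Y * Vᵀ := by
        simp only [mul_assoc]
    _ = V * (X * Y) * Vᵀ := by rw [hV]; simp only [mul_assoc, mul_one, one_mul]

lemma myconj_inv {p : ℕ} {V : Mat p} (hV : Vᵀ * V = 1) (X : Mat p) :
    Vᵀ * (V * X * Vᵀ) * V = X := by
  calc Vᵀ * (V * X * Vᵀ) * V = (Vᵀ * V) * X * (Vᵀ * V) := by simp only [mul_assoc]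
    _ = X := by rw [hV, one_mul, mul_one]

lemma myconj_back {p : ℕ} {V : Mat p} (hV' : V * Vᵀ = 1) (X : Mat p) :
    V * (Vᵀ * X * V) * Vᵀ = X := by
  calc V * (Vᵀ * X * V) * Vᵀ = (V * Vᵀ) * X * (V * Vᵀ) := by simp only [mul_assoc]
    _ = X := by rw [hV', one_mul, mul_one]

lemma conj_comm_diag {p : ℕ} {V : Mat p} (hV : Vᵀ * V = 1) {d : Fin p → ℝ}
    {M : Mat p} (hM : M * (V * Matrix.diagonal d * Vᵀ) = (V * Matrix.diagonal d * Vᵀ) * M) :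
    (Vᵀ * M * V) * Matrix.diagonal d = Matrix.diagonal d * (Vᵀ * M * V) := by
  have hV' : V * Vᵀ = 1 := mul_eq_one_comm.mp hV
  have hD : Vᵀ * (V * Matrix.diagonal d * Vᵀ) * V = Matrix.diagonal d := myconj_inv hV _
  calc (Vᵀ * M * V) * Matrix.diagonal d
      = (Vᵀ * M * V) * (Vᵀ * (V * Matrix.diagonal d * Vᵀ) * V) := by rw [hD]
    _ = Vᵀ * (M * (V * Matrix.diagonal d * Vᵀ)) * V := myconj_mul hV' _ _
    _ = Vᵀ * ((V * Matrix.diagonal d * Vᵀ) * M) * V := by rw [hM]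
    _ = (Vᵀ * (V * Matrix.diagonal d * Vᵀ) * V) * (Vᵀ * M * V) := (myconj_mul hV' _ _).symm
    _ = Matrix.diagonal d * (Vᵀ * M * V) := by rw [hD]

/-- two matrices commuting with `V * diagonal d * Vᵀ` commute with each other. -/
lemma comm_of_comm_diag {p : ℕ} {V : Mat p} (hV : Vᵀ * V = 1) {d : Fin p → ℝ}
    (hd : Function.Injective d) {M₁ M₂ : Mat p}
    (h1 : M₁ * (V * Matrix.diagonal d * Vᵀ) = (V * Matrix.diagonal d * Vᵀ) * M₁)
    (h2 : M₂ * (V * Matrix.diagonal d * Vᵀ) = (V * Matrix.diagonal d * Vᵀ) * M₂) :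
    M₁ * M₂ = M₂ * M₁ := by
  have hV' : V * Vᵀ = 1 := mul_eq_one_comm.mp hV
  set N₁ := Vᵀ * M₁ * V with hN₁
  set N₂ := Vᵀ * M₂ * V with hN₂
  have c1 : ∀ a b, a ≠ b → N₁ a b = 0 := fun a b hab =>
    offdiag_zero_of_commute hd (conj_comm_diag hV h1) hab
  have c2 : ∀ a b, a ≠ b → N₂ a b = 0 := fun a b hab =>
    offdiag_zero_of_commute hd (conj_comm_diag hV h2) hab
  have hcomm : N₁ * N₂ = N₂ * N₁ := offdiag_comm c1 c2
  have e1 : M₁ = V * N₁ * Vᵀ := (myconj_back hV' M₁).symm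
  have e2 : M₂ = V * N₂ * Vᵀ := (myconj_back hV' M₂).symm
  rw [e1, e2, myconj_mul' hV, myconj_mul' hV, hcomm]

/-- Every projection of a decorrelating partition commutes with every `A t`. -/
lemma commute_of_decorr {p n : ℕ} {A : Fin n → Mat p} {q : ℕ} {P : Fin q → Mat p}
    (h : IsDecorrPartition A P) (t : Fin n) (k : Fin q) :
    P k * A t = A t * P k := by
  have hl : P k * A t = P k * A t * P k := by
    calc P k * A t = P k * A t * ∑ j, P j := by rw [h.1.sum_one, mul_one]
      _ = ∑ j, P k * A t * P j := by rw [Finset.mul_sum]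
      _ = P k * A t * P k := by
          refine Finset.sum_eq_single k (fun j _ hj => h.2 t k j (Ne.symm hj)) ?_
          intro hk; exact absurd (Finset.mem_univ k) hk
  have hr : A t * P k = P k * A t * P k := by
    calc A t * P k = (∑ i, P i) * (A t * P k) := by rw [h.1.sum_one, one_mul]
      _ = ∑ i, P i * (A t * P k) := by rw [Finset.sum_mul]
      _ = P k * (A t * P k) := by
          refine Finset.sum_eq_single k (fun i _ hi => ?_) ?_
          · rw [← mul_assoc]; exact h.2 t i k hi
          · intro hk; exact absurd (Finset.mem_univ k) hk
      _ = P k * A t * P k := by rw [mul_assoc]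
  rw [hl, hr]

/-- Lemma A.6 of the paper: if some `A_{t₀}` has `p` pairwise
distinct eigenvalues, then any two irreducible orthogonal `(A_t)`-decorrelating
partitions are equal as unordered families of subspaces. -/
theorem stmt14 {p n : ℕ} (hp : 1 ≤ p) (hn : 1 ≤ n)
    (A : Fin n → Mat p) (hA : ∀ t, (A t).PosDef)
    (t₀ : Fin n)
    (hdist : ∃ (d : Fin p → ℝ) (V : Mat p), Function.Injective d ∧
      Vᵀ * V = 1 ∧ A t₀ = V * Matrix.diagonal d * Vᵀ)
    {q₁ q₂ : ℕ} (P₁ : Fin q₁ → Mat p) (P₂ : Fin q₂ → Mat p)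
    (h₁ : IsIrredDecorrPartition A P₁) (h₂ : IsIrredDecorrPartition A P₂) :
    Set.range P₁ = Set.range P₂ := by
  obtain ⟨d, V, hd, hV, hAt⟩ := hdist
  -- all projections from both partitions commute pairwise
  have hcomm : ∀ (i : Fin q₁) (j : Fin q₂), P₁ i * P₂ j = P₂ j * P₁ i := by
    intro i j
    refine comm_of_comm_diag hV hd ?_ ?_
    · rw [← hAt]; exact commute_of_decorr h₁.1 t₀ i
    · rw [← hAt]; exact commute_of_decorr h₂.1 t₀ j
  -- the common refinement
  set S : Finset (Fin q₁ × Fin q₂) :=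
    Finset.univ.filter (fun ij => P₁ ij.1 * P₂ ij.2 ≠ 0) with hS
  set q' : ℕ := S.card with hq'
  set e : S ≃ Fin q' := S.equivFin with he
  set P' : Fin q' → Mat p := fun k => P₁ ((e.symm k : Fin q₁ × Fin q₂)).1 *
      P₂ ((e.symm k : Fin q₁ × Fin q₂)).2 with hP'
  have memS : ∀ ij : Fin q₁ × Fin q₂, ij ∈ S ↔ P₁ ij.1 * P₂ ij.2 ≠ 0 := by
    intro ij; simp [hS]
  -- P' is a decorrelating partition
  have hpart : IsDecorrPartition A P' := by
    constructor
    · constructor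
      · intro k
        simp only [hP']
        rw [Matrix.transpose_mul, h₁.1.1.symm, h₂.1.1.symm, hcomm]
      · intro k
        simp only [hP']
        rw [mid_swap _ _ _ _ (hcomm _ _).symm, h₁.1.1.idem, h₂.1.1.idem]
      · intro k
        simp only [hP']
        exact (memS _).mp (e.symm k).2
      · intro k l hkl
        have hne : (e.symm k : Fin q₁ × Fin q₂) ≠ (e.symm l : Fin q₁ × Fin q₂) := by
          intro hh
          exact hkl (by
            have := Subtype.ext (p := fun x => x ∈ S) hh
            exact e.symm.injective this ▸ rfl)
        simp only [hP']
        rw [mid_swap _ _ _ _ (hcomm _ _).symm]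
        rcases eq_or_ne ((e.symm k : Fin q₁ × Fin q₂)).1 ((e.symm l : Fin q₁ × Fin q₂)).1 with h1 | h1
        · have h2 : ((e.symm k : Fin q₁ × Fin q₂)).2 ≠ ((e.symm l : Fin q₁ × Fin q₂)).2 := by
            intro h2; exact hne (Prod.ext h1 h2)
          rw [h₂.1.1.orth _ _ h2, mul_zero]
        · rw [h₁.1.1.orth _ _ h1, zero_mul]
      · simp only [hP']
        calc ∑ k : Fin q', P₁ ((e.symm k : Fin q₁ × Fin q₂)).1 * P₂ ((e.symm k : Fin q₁ × Fin q₂)).2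
            = ∑ ij : S, P₁ (ij : Fin q₁ × Fin q₂).1 * P₂ (ij : Fin q₁ × Fin q₂).2 :=
              Equiv.sum_comp e.symm (fun ij : S => P₁ (ij : Fin q₁ × Fin q₂).1 * P₂ (ij : Fin q₁ × Fin q₂).2)
          _ = ∑ ij ∈ S, P₁ ij.1 * P₂ ij.2 :=
              Finset.sum_coe_sort S (fun ij => P₁ ij.1 * P₂ ij.2)
          _ = ∑ ij : Fin q₁ × Fin q₂, P₁ ij.1 * P₂ ij.2 := by
              rw [hS]; exact Finset.sum_filter_ne_zero _
          _ = (∑ i, P₁ i) * (∑ j, P₂ j) := by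
              rw [Finset.sum_mul_sum, ← Finset.sum_product']
              rfl
          _ = 1 := by rw [h₁.1.1.sum_one, h₂.1.1.sum_one, one_mul]
    · intro t k l hkl
      have hne : (e.symm k : Fin q₁ × Fin q₂) ≠ (e.symm l : Fin q₁ × Fin q₂) := by
        intro hh
        exact hkl (by
          have := Subtype.ext (p := fun x => x ∈ S) hh
          exact e.symm.injective this ▸ rfl)
      set i := ((e.symm k : Fin q₁ × Fin q₂)).1
      set j := ((e.symm k : Fin q₁ × Fin q₂)).2
      set a := ((e.symm l : Fin q₁ × Fin q₂)).1
      set b := ((e.symm l : Fin q₁ × Fin q₂)).2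
      have step : (P₁ i * P₂ j) * A t * (P₁ a * P₂ b)
          = ((P₁ i * P₁ a) * A t) * (P₂ j * P₂ b) := by
        calc (P₁ i * P₂ j) * A t * (P₁ a * P₂ b)
            = (P₁ i * P₂ j) * (A t * P₁ a) * P₂ b := by simp only [mul_assoc]
          _ = (P₁ i * P₂ j) * (P₁ a * A t) * P₂ b := by
              rw [commute_of_decorr h₁.1 t a]
          _ = ((P₁ i * P₂ j) * (P₁ a * A t)) * P₂ b := rfl
          _ = ((P₁ i * P₁ a) * (P₂ j * A t)) * P₂ b := by
              rw [mid_swap _ _ _ _ (hcomm a j).symm]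
          _ = ((P₁ i * P₁ a) * (A t * P₂ j)) * P₂ b := by
              rw [commute_of_decorr h₂.1 t j]
          _ = ((P₁ i * P₁ a) * A t) * (P₂ j * P₂ b) := by simp only [mul_assoc]
      show (P₁ i * P₂ j) * A t * (P₁ a * P₂ b) = 0
      rw [step]
      rcases eq_or_ne i a with h1 | h1
      · have h2 : j ≠ b := fun h2 => hne (Prod.ext h1 h2)
        rw [h₂.1.1.orth _ _ h2, mul_zero]
      · rw [h₁.1.1.orth _ _ h1, zero_mul, zero_mul]
  -- cardinality bounds
  have hb1 : q' ≤ q₁ := h₁.2 q' P' hpart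
  have hb2 : q' ≤ q₂ := h₂.2 q' P' hpart
  have hsurj1 : Function.Surjective (fun ij : S => (ij : Fin q₁ × Fin q₂).1) := by
    intro i
    by_contra hcon
    push_neg at hcon
    have hz : ∀ j, P₁ i * P₂ j = 0 := by
      intro j
      by_contra hz
      exact hcon ⟨(i, j), (memS (i, j)).mpr hz⟩ rfl
    have : P₁ i = 0 := by
      calc P₁ i = P₁ i * ∑ j, P₂ j := by rw [h₂.1.1.sum_one, mul_one]
        _ = ∑ j, P₁ i * P₂ j := by rw [Finset.mul_sum]
        _ = 0 := Finset.sum_eq_zero fun j _ => hz j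
    exact h₁.1.1.nonzero i this
  have hsurj2 : Function.Surjective (fun ij : S => (ij : Fin q₁ × Fin q₂).2) := by
    intro j
    by_contra hcon
    push_neg at hcon
    have hz : ∀ i, P₁ i * P₂ j = 0 := by
      intro i
      by_contra hz
      exact hcon ⟨(i, j), (memS (i, j)).mpr hz⟩ rfl
    have : P₂ j = 0 := by
      calc P₂ j = (∑ i, P₁ i) * P₂ j := by rw [h₁.1.1.sum_one, one_mul]
        _ = ∑ i, P₁ i * P₂ j := by rw [Finset.sum_mul]
        _ = 0 := Finset.sum_eq_zero fun i _ => hz i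
    exact h₂.1.1.nonzero j this
  have hcard : Fintype.card S = q' := Fintype.card_coe S
  have hge1 : q₁ ≤ q' := by
    have := Fintype.card_le_of_surjective _ hsurj1
    simpa [hcard] using this
  have hge2 : q₂ ≤ q' := by
    have := Fintype.card_le_of_surjective _ hsurj2
    simpa [hcard] using this
  have hq1 : q' = q₁ := le_antisymm hb1 hge1
  have hq2 : q' = q₂ := le_antisymm hb2 hge2
  have hinj1 : Function.Injective (fun ij : S => (ij : Fin q₁ × Fin q₂).1) := by
    have : Function.Bijective (fun ij : S => (ij : Fin q₁ × Fin q₂).1) := by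
      rw [Fintype.bijective_iff_surjective_and_card]
      exact ⟨hsurj1, by simp [hcard, hq1]⟩
    exact this.1
  have hinj2 : Function.Injective (fun ij : S => (ij : Fin q₁ × Fin q₂).2) := by
    have : Function.Bijective (fun ij : S => (ij : Fin q₁ × Fin q₂).2) := by
      rw [Fintype.bijective_iff_surjective_and_card]
      exact ⟨hsurj2, by simp [hcard, hq2]⟩
    exact this.1
  -- the key pointwise identity
  have key : ∀ ij : Fin q₁ × Fin q₂, ij ∈ S → P₁ ij.1 = P₂ ij.2 := by
    rintro ⟨i, j⟩ hij
    have uniq_j : ∀ j', (i, j') ∈ S → j' = j := by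
      intro j' hj'
      have h' := hinj1 (a₁ := ⟨(i, j'), hj'⟩) (a₂ := ⟨(i, j), hij⟩) rfl
      exact (Prod.ext_iff.mp (congrArg Subtype.val h')).2
    have uniq_i : ∀ i', (i', j) ∈ S → i' = i := by
      intro i' hi'
      have h' := hinj2 (a₁ := ⟨(i', j), hi'⟩) (a₂ := ⟨(i, j), hij⟩) rfl
      exact (Prod.ext_iff.mp (congrArg Subtype.val h')).1
    have e1 : P₁ i = P₁ i * P₂ j := by
      calc P₁ i = P₁ i * ∑ j', P₂ j' := by rw [h₂.1.1.sum_one, mul_one]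
        _ = ∑ j', P₁ i * P₂ j' := by rw [Finset.mul_sum]
        _ = P₁ i * P₂ j := by
            refine Finset.sum_eq_single j (fun j' _ hj' => ?_) ?_
            · by_contra hz
              exact hj' (uniq_j j' ((memS (i, j')).mpr hz))
            · intro hk; exact absurd (Finset.mem_univ j) hk
    have e2 : P₂ j = P₁ i * P₂ j := by
      calc P₂ j = (∑ i', P₁ i') * P₂ j := by rw [h₁.1.1.sum_one, one_mul]
        _ = ∑ i', P₁ i' * P₂ j := by rw [Finset.sum_mul]
        _ = P₁ i * P₂ j := by
            refine Finset.sum_eq_single i (fun i' _ hi' => ?_) ?_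
            · by_contra hz
              exact hi' (uniq_i i' ((memS (i', j)).mpr hz))
            · intro hk; exact absurd (Finset.mem_univ i) hk
    rw [e2]; exact e1
  -- conclude
  apply Set.eq_of_subset_of_subset
  · rintro _ ⟨i, rfl⟩
    obtain ⟨⟨⟨i', j⟩, hij⟩, hfst⟩ := hsurj1 i
    simp only at hfst
    subst hfst
    exact ⟨j, (key _ hij).symm⟩
  · rintro _ ⟨j, rfl⟩
    obtain ⟨⟨⟨i, j'⟩, hij⟩, hsnd⟩ := hsurj2 j
    simp only at hsnd
    subst hsnd
    exact ⟨i, key _ hij⟩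
end
end

section
/- Let {𝒮_j}_{j=1}^q be an orthogonal (Σ_t)_{t∈T}-decorrelating partition. Then for every j ∈ {1,…,q}, the unique maximizer over 𝒮_j of the averaged explained variance β ↦ (1/n)∑_{t∈T} ΔVar_t(β) equals Π_{𝒮_j} Σ̄^{-1} Π_{𝒮_j} c̄, where Σ̄ := (1/n)∑_{t∈T} Σ_t and c̄ := (1/n)∑_{t∈T} Σ_t γ_t. -/
open Matrix Finset MeasureTheory

noncomputable section

/-!
The averaged explained variance is the concave quadratic `β ↦ 2 c̄ᵀβ − βᵀ Σ̄ β`. Since the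
partition decorrelates every `Σ_t`, each projection `Π_j` commutes with every `Σ_t`, hence
with `Σ̄` and with `Σ̄⁻¹`. Then `β₀ := Π_j Σ̄⁻¹ Π_j c̄ = Σ̄⁻¹ Π_j c̄` lies in `𝒮_j` and satisfies
`Σ̄ β₀ = Π_j c̄`, so on `𝒮_j` the objective equals `β₀ᵀ Σ̄ β₀ − (β − β₀)ᵀ Σ̄ (β − β₀)`
by completing the square, and `Σ̄ ≻ 0` gives strict maximality.
-/

theorem commute_of_mul_mul_eq_zero {R ι : Type*} [Semiring R] [Fintype ι] {P : ι → R}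
    (hsum : ∑ i, P i = 1) {a : R} (ha : ∀ i j, i ≠ j → P i * a * P j = 0) (j : ι) :
    Commute (P j) a := by
  have hleft : P j * a = P j * a * P j := by
    calc P j * a = ∑ i, P j * a * P i := by rw [← Finset.mul_sum, hsum, mul_one]
      _ = P j * a * P j := Finset.sum_eq_single j (fun i _ hij => ha j i hij.symm) (by simp)
  have hright : a * P j = P j * a * P j := by
    calc a * P j = ∑ i, P i * a * P j := by rw [← Finset.sum_mul, ← Finset.sum_mul, hsum, one_mul]
      _ = P j * a * P j := Finset.sum_eq_single j (fun i _ hij => ha i j hij) (by simp)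
  exact hleft.trans hright.symm

namespace Matrix

variable {m R : Type*} [Fintype m]

theorem IsSymm.mulVec_dotProduct [CommSemiring R] {S : Matrix m m R} (hS : S.IsSymm)
    (x y : m → R) : (S *ᵥ x) ⬝ᵥ y = x ⬝ᵥ (S *ᵥ y) := by
  rw [dotProduct_comm, ← dotProduct_transpose_mulVec, hS.eq]

theorem IsSymm.two_mul_mulVec_dotProduct_sub [CommRing R] {S : Matrix m m R}
    (hS : S.IsSymm) (x y : m → R) :
    2 * ((S *ᵥ x) ⬝ᵥ y) - y ⬝ᵥ (S *ᵥ y) =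
      x ⬝ᵥ (S *ᵥ x) - (y - x) ⬝ᵥ (S *ᵥ (y - x)) := by
  have hxy : y ⬝ᵥ (S *ᵥ x) = (S *ᵥ x) ⬝ᵥ y := dotProduct_comm _ _
  have hyx : x ⬝ᵥ (S *ᵥ y) = (S *ᵥ x) ⬝ᵥ y := (hS.mulVec_dotProduct x y).symm
  simp only [mulVec_sub, dotProduct_sub, sub_dotProduct, hxy, hyx]
  ring

theorem commute_nonsing_inv_right [DecidableEq m] [CommRing R] {P S : Matrix m m R}
    (hS : IsUnit S) (h : Commute P S) : Commute P S⁻¹ := by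
  obtain ⟨u, rfl⟩ := hS
  rw [← coe_units_inv]
  exact h.units_inv_right

end Matrix

theorem isUMaxOn_quadratic {p : ℕ} {S P : Mat p} (hS : S.PosDef) (hPsymm : P.IsSymm)
    (hPidem : P * P = P) (hPS : Commute P S) (c : Vec p) :
    IsUMaxOn (fun β => 2 * (c ⬝ᵥ β) - β ⬝ᵥ (S *ᵥ β)) P ((P * S⁻¹ * P) *ᵥ c) := by
  have hSsymm : S.IsSymm := isHermitian_iff_isSymm.mp hS.isHermitian
  have hPinv : P * S⁻¹ = S⁻¹ * P := (commute_nonsing_inv_right hS.isUnit hPS).eq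
  rw [mul_assoc, ← hPinv, ← mul_assoc, hPidem]
  have hSβ₀ : S *ᵥ ((P * S⁻¹) *ᵥ c) = P *ᵥ c := by
    rw [hPinv, mulVec_mulVec, ← mul_assoc,
      mul_nonsing_inv S ((isUnit_iff_isUnit_det S).mp hS.isUnit), one_mul]
  have hmem : P *ᵥ ((P * S⁻¹) *ᵥ c) = (P * S⁻¹) *ᵥ c := by
    rw [mulVec_mulVec, ← mul_assoc, hPidem]
  set β₀ := (P * S⁻¹) *ᵥ c
  have hlin : ∀ β, P *ᵥ β = β → c ⬝ᵥ β = (S *ᵥ β₀) ⬝ᵥ β := fun β hβ => by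
    rw [hSβ₀, hPsymm.mulVec_dotProduct, hβ]
  refine ⟨hmem, fun β hβ hne => ?_⟩
  have hpos : 0 < (β - β₀) ⬝ᵥ (S *ᵥ (β - β₀)) := by
    simpa using hS.dotProduct_mulVec_pos (sub_ne_zero.mpr hne)
  have hβ₀ := hSsymm.two_mul_mulVec_dotProduct_sub β₀ β₀
  simp only [sub_self, mulVec_zero, dotProduct_zero] at hβ₀
  simp only [hlin β hβ, hlin β₀ hmem, hSsymm.two_mul_mulVec_dotProduct_sub β₀ β, hβ₀]
  linarith

theorem mul_sum_dVar {p : ℕ} {ι : Type*} [Fintype ι] {C : ι → Mat p}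
    (hC : ∀ t, (C t).IsSymm) (γ : ι → Vec p) (a : ℝ) (β : Vec p) :
    a * ∑ t, dVar (C t) (γ t) β =
      2 * ((a • ∑ t, C t *ᵥ γ t) ⬝ᵥ β) - β ⬝ᵥ ((a • ∑ t, C t) *ᵥ β) := by
  simp only [dVar, ← (hC _).mulVec_dotProduct, smul_dotProduct, sum_dotProduct, smul_mulVec,
    sum_mulVec, dotProduct_smul, dotProduct_sum, smul_eq_mul, sum_sub_distrib, ← mul_sum]
  ring

theorem stmt15_general {p n q : ℕ} (hn : 1 ≤ n)
    (Cov : Fin n → Mat p) (hCov : ∀ t, (Cov t).PosDef)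
    (γ : Fin n → Vec p)
    (P : Fin q → Mat p) (hP : OrthPartition p q P)
    (hdec : ∀ (t : Fin n) (i j : Fin q), i ≠ j → P i * Cov t * P j = 0) :
    ∀ j : Fin q,
      IsUMaxOn (fun β => (n : ℝ)⁻¹ * ∑ t, dVar (Cov t) (γ t) β) (P j)
        ((P j * ((n : ℝ)⁻¹ • ∑ t, Cov t)⁻¹ * P j) *ᵥ
          ((n : ℝ)⁻¹ • ∑ t, (Cov t) *ᵥ γ t)) := by
  intro j
  have : NeZero n := ⟨by omega⟩
  have hmean : ((n : ℝ)⁻¹ • ∑ t, Cov t).PosDef :=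
    (posDef_sum univ_nonempty fun t _ => hCov t).smul (by positivity)
  have hcomm : Commute (P j) ((n : ℝ)⁻¹ • ∑ t, Cov t) :=
    (Commute.sum_right _ _ _ fun t _ =>
      commute_of_mul_mul_eq_zero hP.sum_one (hdec t) j).smul_right _
  simp only [mul_sum_dVar (fun t => isHermitian_iff_isSymm.mp (hCov t).isHermitian)]
  exact isUMaxOn_quadratic hmean (hP.symm j) (hP.idem j) hcomm _

/-- first part of Lemma A.7 of the paper: for an orthogonal
`(Σ_t)`-decorrelating partition, the unique maximizer over `𝒮_j` of the averaged
explained variance is `Π_j Σ̄⁻¹ Π_j c̄`, where `Σ̄ = (1/n)∑ Σ_t` and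
`c̄ = (1/n)∑ Σ_t γ_t`. -/
theorem stmt15 {p n q : ℕ} (hp : 1 ≤ p) (hn : 1 ≤ n)
    (Cov : Fin n → Mat p) (hCov : ∀ t, (Cov t).PosDef)
    (γ : Fin n → Vec p)
    (P : Fin q → Mat p) (hP : OrthPartition p q P)
    (hdec : ∀ (t : Fin n) (i j : Fin q), i ≠ j → P i * Cov t * P j = 0) :
    ∀ j : Fin q,
      IsUMaxOn (fun β => (n : ℝ)⁻¹ * ∑ t, dVar (Cov t) (γ t) β) (P j)
        ((P j * ((n : ℝ)⁻¹ • ∑ t, Cov t)⁻¹ * P j) *ᵥ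
          ((n : ℝ)⁻¹ • ∑ t, (Cov t) *ᵥ γ t)) :=
  stmt15_general hn Cov hCov γ P hP hdec
end
end

section
/- Let {𝒮_j}_{j=1}^q be an orthogonal (Σ_t)_{t∈T}-decorrelating partition and suppose 𝒮_j is opt-invariant on T. Then the unique maximizer over 𝒮_j of the averaged explained variance β ↦ (1/n)∑_{t∈T} ΔVar_t(β) equals Π_{𝒮_j} γ_t for every t ∈ T, hence equals Π_{𝒮_j} γ̄ with γ̄ := (1/n)∑_{t∈T} γ_t; moreover Π_{𝒮_j} γ̄ is time-invariant over T, i.e., (γ_t − Π_{𝒮_j}γ̄)ᵀ Σ_t (Π_{𝒮_j}γ̄) = 0 for every t ∈ T. -/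
open Matrix Finset MeasureTheory

noncomputable section

/-!
On a subspace `S = range Π` the quadratic `ΔVar_t` is maximized at the `Σ_t`-orthogonal
projection of `γ_t`, i.e. at the `b ∈ S` with `(γ_t - b)ᵀ Σ_t β = 0` for all `β ∈ S`.
Decorrelation (`(1 - Π) Σ_t Π = 0`) says that this `Σ_t`-projection is the Euclidean
projection `Π γ_t`. Opt-invariance then forces all `Π γ_t` to equal the common maximizer `β₀`,
so `Π γ̄ = β₀` as well, `β₀` maximizes every summand of the averaged explained variance, and the
normal equation at `b = Π γ_t` is exactly time-invariance.
-/

section Decorrelation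

variable {ι n R : Type*} [Fintype ι] [Fintype n] [DecidableEq n]

theorem one_sub_mul_mul_eq_zero_of_sum_eq_one [Ring R] {P : ι → Matrix n n R}
    (C : Matrix n n R) (hsum : ∑ i, P i = 1) {j : ι} (hdec : ∀ i, i ≠ j → P i * C * P j = 0) :
    (1 - P j) * C * P j = 0 := by
  classical
  rw [← hsum, ← Finset.sum_erase_add _ _ (mem_univ j), add_sub_cancel_right,
    Finset.sum_mul, Finset.sum_mul]
  exact Finset.sum_eq_zero fun i hi => hdec i (Finset.ne_of_mem_erase hi)

theorem sub_mulVec_dotProduct_mulVec_mulVec_eq_zero [CommRing R] {P C : Matrix n n R}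
    (hP : Pᵀ = P) (hdec : (1 - P) * C * P = 0) (v w : n → R) :
    (v - P *ᵥ v) ⬝ᵥ (C *ᵥ (P *ᵥ w)) = 0 := by
  have hv : v - P *ᵥ v = (1 - P)ᵀ *ᵥ v := by
    rw [transpose_sub, transpose_one, hP, sub_mulVec, one_mulVec]
  rw [hv, mulVec_transpose, dotProduct_mulVec, vecMul_vecMul, ← dotProduct_mulVec,
    mulVec_mulVec, hdec, zero_mulVec, dotProduct_zero]

end Decorrelation

section ExplainedVariance

variable {p : ℕ}

theorem dVar_add {C : Mat p} (hC : C.IsSymm) (γ b δ : Vec p) :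
    dVar C γ (b + δ) = dVar C γ b + 2 * ((γ - b) ⬝ᵥ (C *ᵥ δ)) - δ ⬝ᵥ (C *ᵥ δ) := by
  have hsymm : δ ⬝ᵥ (C *ᵥ b) = b ⬝ᵥ (C *ᵥ δ) := by
    rw [dotProduct_mulVec, ← mulVec_transpose, hC.eq, dotProduct_comm]
  simp only [dVar, mulVec_add, dotProduct_add, add_dotProduct, sub_dotProduct, hsymm]
  ring

theorem isUMaxOn_dVar_of_dotProduct_eq_zero {C P : Mat p} (hC : C.PosDef) {γ b : Vec p}
    (hb : P *ᵥ b = b) (hnormal : ∀ β, P *ᵥ β = β → (γ - b) ⬝ᵥ (C *ᵥ β) = 0) :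
    IsUMaxOn (dVar C γ) P b := by
  refine ⟨hb, fun β hβ hne => ?_⟩
  have hδ : P *ᵥ (β - b) = β - b := by rw [mulVec_sub, hβ, hb]
  have hpos : 0 < (β - b) ⬝ᵥ (C *ᵥ (β - b)) := by
    simpa using hC.dotProduct_mulVec_pos (sub_ne_zero.mpr hne)
  have hsymm : C.IsSymm := isHermitian_iff_isSymm.mp hC.isHermitian
  have := dVar_add hsymm γ b (β - b)
  rw [add_sub_cancel, hnormal _ hδ] at this
  linarith

end ExplainedVariance

section UniqueMaximizer

variable {p : ℕ} {P : Mat p}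

theorem IsUMaxOn.eq {f : Vec p → ℝ} {a b : Vec p} (ha : IsUMaxOn f P a)
    (hb : IsUMaxOn f P b) : a = b := by
  by_contra hne
  linarith [ha.2 b hb.1 (Ne.symm hne), hb.2 a ha.1 hne]

theorem IsUMaxOn.const_mul_sum_s16 {ι : Type*} [Fintype ι] [Nonempty ι] {f : ι → Vec p → ℝ}
    {b : Vec p} (hf : ∀ s, IsUMaxOn (f s) P b) {c : ℝ} (hc : 0 < c) :
    IsUMaxOn (fun β => c * ∑ s, f s β) P b := by
  obtain ⟨s₀⟩ := ‹Nonempty ι›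
  refine ⟨(hf s₀).1, fun β hβ hne => mul_lt_mul_of_pos_left ?_ hc⟩
  exact Finset.sum_lt_sum_of_nonempty univ_nonempty fun s _ => (hf s).2 β hβ hne

end UniqueMaximizer

theorem mulVec_average_of_forall_mulVec_eq {ι l m K : Type*} [Fintype ι] [Nonempty ι]
    [Fintype m] [Field K] [CharZero K] (A : Matrix l m K) {v : ι → m → K} {b : l → K}
    (hv : ∀ t, A *ᵥ v t = b) :
    A *ᵥ ((Fintype.card ι : K)⁻¹ • ∑ t, v t) = b := by
  rw [mulVec_smul, mulVec_sum, Finset.sum_congr rfl fun t _ => hv t, sum_const, card_univ,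
    ← Nat.cast_smul_eq_nsmul K, smul_smul, inv_mul_cancel₀ (by simp), one_smul]

theorem stmt16_general {p n q : ℕ} (hn : 1 ≤ n)
    (Cov : Fin n → Mat p) (hCov : ∀ t, (Cov t).PosDef)
    (γ : Fin n → Vec p)
    (P : Fin q → Mat p) (hP : OrthPartition p q P)
    (hdec : ∀ (t : Fin n) (i j : Fin q), i ≠ j → P i * Cov t * P j = 0)
    (j : Fin q)
    (hopt : ∃ β₀ : Vec p, ∀ t : Fin n, IsUMaxOn (dVar (Cov t) (γ t)) (P j) β₀) :
    (∀ t : Fin n,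
      IsUMaxOn (fun β => (n : ℝ)⁻¹ * ∑ s, dVar (Cov s) (γ s) β) (P j)
        ((P j) *ᵥ γ t)) ∧
    IsUMaxOn (fun β => (n : ℝ)⁻¹ * ∑ s, dVar (Cov s) (γ s) β) (P j)
      ((P j) *ᵥ ((n : ℝ)⁻¹ • ∑ t, γ t)) ∧
    (∀ t : Fin n,
      (γ t - (P j) *ᵥ ((n : ℝ)⁻¹ • ∑ s, γ s)) ⬝ᵥ
        ((Cov t) *ᵥ ((P j) *ᵥ ((n : ℝ)⁻¹ • ∑ s, γ s))) = 0) := by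
  obtain ⟨β₀, hβ₀⟩ := hopt
  have : Nonempty (Fin n) := ⟨⟨0, hn⟩⟩
  have horth : ∀ t v w, (v - P j *ᵥ v) ⬝ᵥ (Cov t *ᵥ (P j *ᵥ w)) = 0 := fun t =>
    sub_mulVec_dotProduct_mulVec_mulVec_eq_zero (hP.symm j)
      (one_sub_mul_mul_eq_zero_of_sum_eq_one (Cov t) hP.sum_one fun i hi => hdec t i j hi)
  have hPγ : ∀ t, P j *ᵥ γ t = β₀ := fun t =>
    (isUMaxOn_dVar_of_dotProduct_eq_zero (hCov t) (by rw [mulVec_mulVec, hP.idem])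
      fun β hβ => hβ ▸ horth t (γ t) β).eq (hβ₀ t)
  have hPγbar : P j *ᵥ ((n : ℝ)⁻¹ • ∑ t, γ t) = β₀ := by
    simpa using mulVec_average_of_forall_mulVec_eq (P j) hPγ
  have havg := IsUMaxOn.const_mul_sum_s16 hβ₀ (inv_pos.mpr (Nat.cast_pos.mpr hn))
  refine ⟨fun t => hPγ t ▸ havg, hPγbar ▸ havg, fun t => ?_⟩
  rw [hPγbar, ← hPγ t]
  exact horth t (γ t) (γ t)

/-- second part of Lemma A.7 of the paper: if `𝒮_j` is
opt-invariant on `{1,…,n}`, the unique maximizer over `𝒮_j` of the averaged explained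
variance equals `Π_j γ_t` for every `t`, hence equals `Π_j γ̄`; moreover `Π_j γ̄` is
time-invariant over `{1,…,n}`. -/
theorem stmt16 {p n q : ℕ} (hp : 1 ≤ p) (hn : 1 ≤ n)
    (Cov : Fin n → Mat p) (hCov : ∀ t, (Cov t).PosDef)
    (γ : Fin n → Vec p)
    (P : Fin q → Mat p) (hP : OrthPartition p q P)
    (hdec : ∀ (t : Fin n) (i j : Fin q), i ≠ j → P i * Cov t * P j = 0)
    (j : Fin q)
    (hopt : ∃ β₀ : Vec p, ∀ t : Fin n, IsUMaxOn (dVar (Cov t) (γ t)) (P j) β₀) :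
    (∀ t : Fin n,
      IsUMaxOn (fun β => (n : ℝ)⁻¹ * ∑ s, dVar (Cov s) (γ s) β) (P j)
        ((P j) *ᵥ γ t)) ∧
    IsUMaxOn (fun β => (n : ℝ)⁻¹ * ∑ s, dVar (Cov s) (γ s) β) (P j)
      ((P j) *ᵥ ((n : ℝ)⁻¹ • ∑ t, γ t)) ∧
    (∀ t : Fin n,
      (γ t - (P j) *ᵥ ((n : ℝ)⁻¹ • ∑ s, γ s)) ⬝ᵥ
        ((Cov t) *ᵥ ((P j) *ᵥ ((n : ℝ)⁻¹ • ∑ s, γ s))) = 0) :=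
  stmt16_general hn Cov hCov γ P hP hdec j hopt
end
end

section
/- Suppose 𝒮^inv and 𝒮^res are orthogonal linear subspaces with 𝒮^inv ⊕ 𝒮^res = ℝ^p and Π_{𝒮^inv} Σ_t Π_{𝒮^res} = 0 for all t ∈ T, suppose 𝒮^inv is opt-invariant on T with common maximizer β^inv (so that β^inv = Π_{𝒮^inv}γ_t for all t ∈ T), and let U^res be a matrix whose columns form an orthonormal basis of 𝒮^res. Then for every t ∈ T, the matrix (U^res)ᵀ Σ_t U^res is positive definite and the residual component δ_t := Π_{𝒮^res} γ_t satisfies δ_t = U^res ((U^res)ᵀ Σ_t U^res)^{-1} (U^res)ᵀ Σ_t (γ_t − β^inv). (In the paper's notation, δ_t^res = U^res Var((U^res)ᵀX_t)^{-1} Cov((U^res)ᵀX_t, Y_t − X_tᵀβ^inv).) -/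
open Matrix Finset MeasureTheory

/-!
Since `Σ_t` is block diagonal for `𝒮^inv ⊕ 𝒮^res` and `β^inv ∈ 𝒮^inv`, the residual
covariance `(U^res)ᵀ Σ_t (γ_t − β^inv)` only sees the `𝒮^res`-component of `γ_t`: it equals
`(U^res)ᵀ Σ_t U^res · (U^res)ᵀ γ_t`. Inverting the compressed covariance and mapping back
with `U^res` gives `U^res (U^res)ᵀ γ_t = Π_{𝒮^res} γ_t`.
-/

namespace Matrix

variable {m k R : Type*} [Fintype m] [Fintype k] [CommRing R]

theorem mulVec_injective_of_transpose_mul_self_eq_one [DecidableEq k] {U : Matrix m k R}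
    (hU : Uᵀ * U = 1) : Function.Injective U.mulVec :=
  Function.LeftInverse.injective (g := Uᵀ.mulVec) fun x => by
    rw [mulVec_mulVec, hU, one_mulVec]

variable {U : Matrix m k R} {C P Q : Matrix m m R}

theorem transpose_mul_mul_eq_zero_of_mul_transpose_eq [DecidableEq k] (hU : Uᵀ * U = 1)
    (hUQ : U * Uᵀ = Q) (hQCP : Q * C * P = 0) : Uᵀ * C * P = 0 := by
  have hUtQ : Uᵀ * Q = Uᵀ := by rw [← hUQ, ← Matrix.mul_assoc, hU, Matrix.one_mul]
  rw [← hUtQ, Matrix.mul_assoc Uᵀ Q C, Matrix.mul_assoc, hQCP, Matrix.mul_zero]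

theorem transpose_mul_eq_of_add_mul_transpose_eq_one [DecidableEq m] (hUCP : Uᵀ * C * P = 0)
    (hPU : P + U * Uᵀ = 1) : Uᵀ * C = Uᵀ * C * U * Uᵀ := by
  calc Uᵀ * C = Uᵀ * C * (P + U * Uᵀ) := by rw [hPU, Matrix.mul_one]
    _ = Uᵀ * C * U * Uᵀ := by rw [Matrix.mul_add, hUCP, zero_add, Matrix.mul_assoc _ U]

end Matrix

open Matrix in
theorem mul_transpose_mulVec_eq_of_compression {m k K : Type*} [Fintype m] [Fintype k]
    [DecidableEq m] [DecidableEq k] [Field K] {U : Matrix m k K} {C P : Matrix m m K}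
    (hUCP : Uᵀ * C * P = 0) (hPU : P + U * Uᵀ = 1) (hA : IsUnit (Uᵀ * C * U).det)
    (γ b : m → K) (hb : P *ᵥ b = b) :
    (U * Uᵀ) *ᵥ γ = U *ᵥ ((Uᵀ * C * U)⁻¹ *ᵥ (Uᵀ *ᵥ (C *ᵥ (γ - b)))) := by
  have hb_zero : Uᵀ *ᵥ (C *ᵥ b) = 0 := by
    rw [← hb, mulVec_mulVec, mulVec_mulVec, hUCP, zero_mulVec]
  have hγ : Uᵀ *ᵥ (C *ᵥ γ) = (Uᵀ * C * U) *ᵥ (Uᵀ *ᵥ γ) := by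
    rw [mulVec_mulVec, mulVec_mulVec, ← transpose_mul_eq_of_add_mul_transpose_eq_one hUCP hPU]
  rw [mulVec_sub, mulVec_sub, hb_zero, sub_zero, hγ, mulVec_mulVec _ _ (Uᵀ * C * U),
    nonsing_inv_mul _ hA, one_mulVec, mulVec_mulVec]

theorem stmt18_general {p n k : ℕ}
    (Cov : Fin n → Mat p) (hCov : ∀ t, (Cov t).PosDef)
    (γ : Fin n → Vec p)
    (Pinv Pres : Mat p)
    (hsymm₁ : Pinvᵀ = Pinv)
    (hsymm₂ : Presᵀ = Pres)
    (hsum : Pinv + Pres = 1)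
    (hdec : ∀ t : Fin n, Pinv * Cov t * Pres = 0)
    (βinv : Vec p)
    (hopt : ∀ t : Fin n, IsUMaxOn (dVar (Cov t) (γ t)) Pinv βinv)
    (Ures : Matrix (Fin p) (Fin k) ℝ)
    (hUres₁ : Uresᵀ * Ures = 1)
    (hUres₂ : Ures * Uresᵀ = Pres) :
    ∀ t : Fin n,
      (Uresᵀ * Cov t * Ures).PosDef ∧
      Pres *ᵥ γ t
        = Ures *ᵥ ((Uresᵀ * Cov t * Ures)⁻¹ *ᵥ
            (Uresᵀ *ᵥ ((Cov t) *ᵥ (γ t - βinv)))) := by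
  intro t
  have hpd : (Uresᵀ * Cov t * Ures).PosDef := by
    simpa only [conjTranspose_eq_transpose_of_trivial] using
      (hCov t).conjTranspose_mul_mul_same (mulVec_injective_of_transpose_mul_self_eq_one hUres₁)
  have hCsymm : (Cov t)ᵀ = Cov t := by
    simpa only [conjTranspose_eq_transpose_of_trivial] using (hCov t).isHermitian.eq
  have hres_inv : Pres * Cov t * Pinv = 0 := by
    simpa only [transpose_mul, hsymm₁, hsymm₂, hCsymm, Matrix.mul_assoc, transpose_zero]
      using congrArg transpose (hdec t)
  refine ⟨hpd, ?_⟩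
  rw [← hUres₂]
  exact mul_transpose_mulVec_eq_of_compression
    (transpose_mul_mul_eq_zero_of_mul_transpose_eq hUres₁ hUres₂ hres_inv)
    (hUres₂ ▸ hsum) ((isUnit_iff_isUnit_det _).1 hpd.isUnit) (γ t) βinv (hopt t).1

/-- Equation (11) of the paper: with `U^res` a matrix whose columns
form an orthonormal basis of `𝒮^res`, the matrix `(U^res)ᵀ Σ_t U^res` is positive
definite and the residual component `δ_t = Π_{𝒮^res} γ_t` satisfies
`δ_t = U^res ((U^res)ᵀ Σ_t U^res)⁻¹ (U^res)ᵀ Σ_t (γ_t − β^inv)`. -/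
theorem stmt18 {p n k : ℕ} (hp : 1 ≤ p) (hn : 1 ≤ n)
    (Cov : Fin n → Mat p) (hCov : ∀ t, (Cov t).PosDef)
    (γ : Fin n → Vec p)
    (Pinv Pres : Mat p)
    (hsymm₁ : Pinvᵀ = Pinv) (hidem₁ : Pinv * Pinv = Pinv)
    (hsymm₂ : Presᵀ = Pres) (hidem₂ : Pres * Pres = Pres)
    (horth : Pinv * Pres = 0)
    (hsum : Pinv + Pres = 1)
    (hdec : ∀ t : Fin n, Pinv * Cov t * Pres = 0)
    (βinv : Vec p)
    (hopt : ∀ t : Fin n, IsUMaxOn (dVar (Cov t) (γ t)) Pinv βinv)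
    (Ures : Matrix (Fin p) (Fin k) ℝ)
    (hUres₁ : Uresᵀ * Ures = 1)
    (hUres₂ : Ures * Uresᵀ = Pres) :
    ∀ t : Fin n,
      (Uresᵀ * Cov t * Ures).PosDef ∧
      Pres *ᵥ γ t
        = Ures *ᵥ ((Uresᵀ * Cov t * Ures)⁻¹ *ᵥ
            (Uresᵀ *ᵥ ((Cov t) *ᵥ (γ t - βinv)))) :=
  stmt18_general Cov hCov γ Pinv Pres hsymm₁ hsymm₂ hsum hdec βinv hopt Ures hUres₁ hUres₂
end

section
/- Let U be an invertible p×p real matrix, let S_1,…,S_q be a partition of the column index set {1,…,p}, and suppose that for all t ∈ T and all i ≠ j one has (U^{S_i})ᵀ Σ_t U^{S_j} = 0 (i.e., UᵀΣ_tU is block diagonal with respect to S_1,…,S_q). Set W := (U^{-1})ᵀ and, for each j, define the oblique projection matrix P_j := U^{S_j}(W^{S_j})ᵀ (the projection onto the column span of U^{S_j} along the direct sum of the column spans of the other U^{S_i}). Then for every t ∈ T and every j ∈ {1,…,q}, the matrix (U^{S_j})ᵀ Σ_t U^{S_j} is invertible and P_j γ_t = U^{S_j} ((U^{S_j})ᵀ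 Σ_t U^{S_j})^{-1} (U^{S_j})ᵀ Σ_t γ_t; moreover γ_t = ∑_{j=1}^q P_j γ_t. -/
open Matrix Finset MeasureTheory

noncomputable section

/-! Write `γ = U d` with `d = U⁻¹ γ`. Then `P_j γ = U^{S_j} d_{S_j}`, so `∑ P_j = U U⁻¹ = 1`. Since
`A = Uᵀ Σ U` is block diagonal, `(U^{S_j})ᵀ Σ γ = (A d)_{S_j} = A_{S_j S_j} d_{S_j}`: the coordinates
`d_{S_j}` solve the normal equations of the block, whose matrix `A_{S_j S_j}` is a principal
submatrix of the positive definite `A`, hence invertible. -/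

namespace Finset

theorem sum_sum_eq_sum_of_partition {ι κ M : Type*} [Fintype ι] [Fintype κ] [DecidableEq ι]
    [AddCommMonoid M] {S : κ → Finset ι} (hdisj : ∀ i j, i ≠ j → Disjoint (S i) (S j))
    (hcover : ∀ k, ∃ j, k ∈ S j) (f : ι → M) :
    ∑ j, ∑ k ∈ S j, f k = ∑ k, f k := by
  rw [← sum_biUnion fun i _ j _ hij => hdisj i j hij]
  refine sum_congr (eq_univ_of_forall fun k => ?_) fun _ _ => rfl
  obtain ⟨j, hj⟩ := hcover k
  exact mem_biUnion.2 ⟨j, mem_univ j, hj⟩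

end Finset

namespace Matrix

theorem mulVec_restrict_of_apply_eq_zero {ι R : Type*} [Fintype ι] [NonUnitalNonAssocSemiring R]
    {A : Matrix ι ι R} {S : Finset ι} (hA : ∀ k ∈ S, ∀ l ∉ S, A k l = 0) (d : ι → R) :
    (fun k : S => (A *ᵥ d) k) = A.submatrix (↑) (↑) *ᵥ fun l : S => d l := by
  ext k
  simp only [mulVec, dotProduct, submatrix_apply]
  rw [Finset.sum_coe_sort S (fun l => A k l * d l)]
  exact (Finset.sum_subset (Finset.subset_univ S)
    fun l _ hl => by rw [hA k k.2 l hl, zero_mul]).symm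

end Matrix

section ColSub

variable {m : ℕ}

theorem colSub_transpose_mul_mul_colSub (U C : Mat m) (S : Finset (Fin m)) :
    (colSub U S)ᵀ * C * colSub U S = (Uᵀ * C * U).submatrix (↑) (↑) := by
  ext k l
  simp only [colSub, mul_apply, transpose_apply, submatrix_apply, id]

theorem colSub_transpose_mulVec (U : Mat m) (S : Finset (Fin m)) (v : Vec m) :
    (colSub U S)ᵀ *ᵥ v = fun k : S => (Uᵀ *ᵥ v) k := by
  ext k
  simp only [colSub, mulVec, dotProduct, transpose_apply, submatrix_apply, id]

theorem colSub_mul_colSub_transpose_apply (U V : Mat m) (S : Finset (Fin m)) (a b : Fin m) :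
    (colSub U S * (colSub V S)ᵀ) a b = ∑ k ∈ S, U a k * V b k :=
  Finset.sum_coe_sort S fun k => U a k * V b k

theorem sum_colSub_mul_colSub_transpose {q : ℕ} (U V : Mat m) {S : Fin q → Finset (Fin m)}
    (hdisj : ∀ i j, i ≠ j → Disjoint (S i) (S j)) (hcover : ∀ k, ∃ j, k ∈ S j) :
    ∑ j, colSub U (S j) * (colSub V (S j))ᵀ = U * Vᵀ := by
  ext a b
  simp only [Matrix.sum_apply, colSub_mul_colSub_transpose_apply]
  rw [mul_apply]
  exact Finset.sum_sum_eq_sum_of_partition hdisj hcover _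

theorem Matrix.PosDef.colSub_transpose_mul_mul_colSub {C : Mat m} (hC : C.PosDef) {U : Mat m}
    (hU : IsUnit U.det) (S : Finset (Fin m)) :
    ((colSub U S)ᵀ * C * colSub U S).PosDef := by
  have hUCU : (Uᵀ * C * U).PosDef := by
    simpa only [conjTranspose_eq_transpose_of_trivial] using
      hC.conjTranspose_mul_mul_same (mulVec_injective_of_isUnit ((isUnit_iff_isUnit_det U).2 hU))
  rw [_root_.colSub_transpose_mul_mul_colSub]
  exact hUCU.submatrix Subtype.val_injective

theorem colSub_mul_colSub_inv_transpose_mulVec {C U : Mat m} (hU : IsUnit U.det)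
    {S : Finset (Fin m)} (hblock : ∀ k ∈ S, ∀ l ∉ S, (Uᵀ * C * U) k l = 0)
    (hM : IsUnit ((colSub U S)ᵀ * C * colSub U S)) (γ : Vec m) :
    (colSub U S * (colSub (U⁻¹)ᵀ S)ᵀ) *ᵥ γ =
      colSub U S *ᵥ (((colSub U S)ᵀ * C * colSub U S)⁻¹ *ᵥ ((colSub U S)ᵀ *ᵥ (C *ᵥ γ))) := by
  have hnormal : (colSub U S)ᵀ *ᵥ (C *ᵥ γ) =
      ((colSub U S)ᵀ * C * colSub U S) *ᵥ ((colSub (U⁻¹)ᵀ S)ᵀ *ᵥ γ) := by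
    have hUC : Uᵀ * C = Uᵀ * C * U * U⁻¹ := by
      rw [Matrix.mul_assoc (Uᵀ * C), mul_nonsing_inv U hU, Matrix.mul_one]
    rw [colSub_transpose_mulVec, colSub_transpose_mulVec, transpose_transpose, mulVec_mulVec, hUC,
      ← mulVec_mulVec, mulVec_restrict_of_apply_eq_zero hblock, colSub_transpose_mul_mul_colSub]
  rw [hnormal, mulVec_mulVec (M := ((colSub U S)ᵀ * C * colSub U S)⁻¹),
    nonsing_inv_mul _ ((isUnit_iff_isUnit_det _).1 hM), one_mulVec, mulVec_mulVec]

end ColSub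

theorem stmt19_general {p n q : ℕ}
    (Cov : Fin n → Mat p) (hCov : ∀ t, (Cov t).PosDef)
    (γ : Fin n → Vec p)
    (U : Mat p) (hU : IsUnit U.det)
    (S : Fin q → Finset (Fin p))
    (hdisj : ∀ i j, i ≠ j → Disjoint (S i) (S j))
    (hcover : ∀ k : Fin p, ∃ j, k ∈ S j)
    (hblock : ∀ (t : Fin n) (i j : Fin q), i ≠ j →
      ∀ k ∈ S i, ∀ l ∈ S j, (Uᵀ * Cov t * U) k l = 0) :
    ∀ t : Fin n,
      (∀ j : Fin q,
        IsUnit ((colSub U (S j))ᵀ * Cov t * colSub U (S j)) ∧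
        (colSub U (S j) * (colSub ((U⁻¹)ᵀ) (S j))ᵀ) *ᵥ γ t
          = colSub U (S j) *ᵥ
              (((colSub U (S j))ᵀ * Cov t * colSub U (S j))⁻¹ *ᵥ
                ((colSub U (S j))ᵀ *ᵥ ((Cov t) *ᵥ γ t)))) ∧
      γ t = ∑ j : Fin q, (colSub U (S j) * (colSub ((U⁻¹)ᵀ) (S j))ᵀ) *ᵥ γ t := by
  intro t
  have hblock_at : ∀ j, ∀ k ∈ S j, ∀ l ∉ S j, (Uᵀ * Cov t * U) k l = 0 := by
    intro j k hk l hl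
    obtain ⟨i, hi⟩ := hcover l
    exact hblock t j i (by rintro rfl; exact hl hi) k hk l hi
  refine ⟨fun j => ?_, ?_⟩
  · have hM := ((hCov t).colSub_transpose_mul_mul_colSub hU (S j)).isUnit
    exact ⟨hM, colSub_mul_colSub_inv_transpose_mulVec hU (hblock_at j) hM (γ t)⟩
  · rw [← sum_mulVec, sum_colSub_mul_colSub_transpose U _ hdisj hcover, transpose_transpose,
      mul_nonsing_inv U hU, one_mulVec]

/-- Proposition A.1 (i) of the paper, non-orthogonal case: for an
invertible joint block diagonalizer `U` with index blocks `S_1,…,S_q` and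
`W = (U⁻¹)ᵀ`, the oblique projections `P_j = U^{S_j}(W^{S_j})ᵀ` satisfy
`P_j γ_t = U^{S_j} ((U^{S_j})ᵀ Σ_t U^{S_j})⁻¹ (U^{S_j})ᵀ Σ_t γ_t` (with
`(U^{S_j})ᵀ Σ_t U^{S_j}` invertible) and `γ_t = ∑_j P_j γ_t`. -/
theorem stmt19 {p n q : ℕ} (hp : 1 ≤ p) (hn : 1 ≤ n)
    (Cov : Fin n → Mat p) (hCov : ∀ t, (Cov t).PosDef)
    (γ : Fin n → Vec p)
    (U : Mat p) (hU : IsUnit U.det)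
    (S : Fin q → Finset (Fin p))
    (hdisj : ∀ i j, i ≠ j → Disjoint (S i) (S j))
    (hcover : ∀ k : Fin p, ∃ j, k ∈ S j)
    (hblock : ∀ (t : Fin n) (i j : Fin q), i ≠ j →
      ∀ k ∈ S i, ∀ l ∈ S j, (Uᵀ * Cov t * U) k l = 0) :
    ∀ t : Fin n,
      (∀ j : Fin q,
        IsUnit ((colSub U (S j))ᵀ * Cov t * colSub U (S j)) ∧
        (colSub U (S j) * (colSub ((U⁻¹)ᵀ) (S j))ᵀ) *ᵥ γ t
          = colSub U (S j) *ᵥ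
              (((colSub U (S j))ᵀ * Cov t * colSub U (S j))⁻¹ *ᵥ
                ((colSub U (S j))ᵀ *ᵥ ((Cov t) *ᵥ γ t)))) ∧
      γ t = ∑ j : Fin q, (colSub U (S j) * (colSub ((U⁻¹)ᵀ) (S j))ᵀ) *ᵥ γ t :=
  stmt19_general Cov hCov γ U hU S hdisj hcover hblock
end
end
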